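/- Let N be a positive integer and c > 0. Suppose f_0(n) ≥ c·√(n/2) for all n with N ≤ n ≤ 2N-1, and suppose f_0 satisfies f_0(2n+1) ≥ √2·f_0(n), f_0(2n) > √2·f_0(n) - 1/√2, and f_0(n) ≤ √((n+1)/2) for all n. Then f_0(n) > (c - (1+√2)/√N)·√(n/2) for all n ≥ N. -/

import Mathlib

open Real

/-! The bound is propagated from the block `N ≤ n < 2N` to all `n ≥ N` by passing from `m` to
`2m` and `2m + 1`. With `a = c - (1 + √2)/√N` and `b = (1 + √2)/√2`, the fixed point of
`x ↦ √2 x - 1/√2`, the function `g n = a √(n/2) + b` satisfies `g (2m) = √2 g m - 1/√2` exactly,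
and `g (2m+1) ≤ √2 g m` as soon as `a ≤ √2`, which holds since `c ≤ √2` by the upper bound at `N`.
On the base block `g n ≤ c √(n/2)` because `n ≥ N`, and `b > 0` makes the final inequality
strict. -/

theorem Nat.le_induction_binary {P : ℕ → Prop} {N : ℕ} (hN : 0 < N)
    (base : ∀ n, N ≤ n → n < 2 * N → P n)
    (step : ∀ m, N ≤ m → P m → P (2 * m) ∧ P (2 * m + 1)) :
    ∀ n, N ≤ n → P n := by
  intro n
  induction n using Nat.strong_induction_on with
  | _ n ih =>
    intro hn
    by_cases hsmall : n < 2 * N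
    · exact base n hn hsmall
    obtain ⟨m, rfl | rfl⟩ := Nat.even_or_odd' n
    · exact (step m (by omega) (ih m (by omega) (by omega))).1
    · exact (step m (by omega) (ih m (by omega) (by omega))).2

namespace Real

theorem sqrt_two_mul_sqrt_div_two (x : ℝ) : √2 * √(x / 2) = √x := by
  rw [← sqrt_mul zero_le_two, mul_div_cancel₀ x two_ne_zero]

theorem sqrt_add_half_le {x : ℝ} (hx : 1 / 16 ≤ x) : √(x + 1 / 2) ≤ √x + 1 / 2 := by
  have hsx : 1 / 4 ≤ √x := (le_sqrt (by norm_num) (by linarith)).mpr (by linarith)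
  rw [sqrt_le_left (by positivity)]
  nlinarith [sq_sqrt (show 0 ≤ x by linarith)]

theorem le_sqrt_two_of_mul_sqrt_half_le {c x : ℝ} (hx : 1 ≤ x)
    (h : c * √(x / 2) ≤ √((x + 1) / 2)) : c ≤ √2 := by
  have hpos : 0 < √(x / 2) := sqrt_pos.mpr (by linarith)
  refine le_of_mul_le_mul_right (h.trans ?_) hpos
  rw [← sqrt_mul zero_le_two]
  exact sqrt_le_sqrt (by linarith)

theorem div_sqrt_mul_sqrt_div_comm {x : ℝ} (hx : 0 ≤ x) (b y z : ℝ) :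
    b / √y * √(x / z) = b / √z * √(x / y) := by
  rw [sqrt_div hx, sqrt_div hx]
  ring

theorem sqrt_two_mul_one_add_sqrt_two_div_sqrt_two :
    √2 * ((1 + √2) / √2) = (1 + √2) / √2 + 1 / √2 := by
  have hs0 : √2 ≠ 0 := by positivity
  field_simp
  linear_combination mul_self_sqrt (zero_le_two : (0 : ℝ) ≤ 2)

end Real

noncomputable def binaryLowerBound (a : ℝ) (n : ℕ) : ℝ := a * √(n / 2) + (1 + √2) / √2

theorem binaryLowerBound_two_mul (a : ℝ) (m : ℕ) :
    binaryLowerBound a (2 * m) = √2 * binaryLowerBound a m - 1 / √2 := by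
  unfold binaryLowerBound
  rw [mul_add, mul_left_comm, sqrt_two_mul_sqrt_div_two, sqrt_two_mul_one_add_sqrt_two_div_sqrt_two]
  push_cast
  rw [mul_div_cancel_left₀ _ two_ne_zero]
  ring

theorem binaryLowerBound_two_mul_add_one_le {a : ℝ} (ha : a ≤ √2) {m : ℕ} (hm : 1 ≤ m) :
    binaryLowerBound a (2 * m + 1) ≤ √2 * binaryLowerBound a m := by
  have hs : √2 * √2 = 2 := mul_self_sqrt zero_le_two
  have hs0 : 0 < √2 := by positivity
  have hgap_le : √(m + 1 / 2 : ℝ) - √m ≤ 1 / 2 := by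
    have : (1 : ℝ) ≤ m := by exact_mod_cast hm
    linarith [sqrt_add_half_le (show (1 : ℝ) / 16 ≤ m by linarith)]
  have hgap_nonneg : 0 ≤ √(m + 1 / 2 : ℝ) - √m := by
    linarith [sqrt_le_sqrt (show (m : ℝ) ≤ m + 1 / 2 by linarith)]
  have hloss : a * (√(m + 1 / 2 : ℝ) - √m) ≤ 1 / √2 := by
    rw [le_div_iff₀ hs0]
    rcases le_or_gt a 0 with ha0 | ha0
    · nlinarith [mul_nonpos_of_nonpos_of_nonneg ha0 hgap_nonneg]
    · nlinarith [mul_le_mul ha hgap_le hgap_nonneg hs0.le]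
  have hcast : ((2 * m + 1 : ℕ) : ℝ) / 2 = m + 1 / 2 := by push_cast; ring
  unfold binaryLowerBound
  rw [hcast, mul_add, mul_left_comm, sqrt_two_mul_sqrt_div_two,
    sqrt_two_mul_one_add_sqrt_two_div_sqrt_two]
  linarith

theorem binaryLowerBound_le {N n : ℕ} (hN : 0 < N) (hn : N ≤ n) (c : ℝ) :
    binaryLowerBound (c - (1 + √2) / √N) n ≤ c * √(n / 2) := by
  have hNn : (1 : ℝ) ≤ n / N := by
    rw [one_le_div (by exact_mod_cast hN)]
    exact_mod_cast hn
  have hratio : 1 ≤ √(n / N : ℝ) := one_le_sqrt.mpr hNn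
  have hb : 0 ≤ (1 + √2) / √2 := by positivity
  unfold binaryLowerBound
  rw [sub_mul, div_sqrt_mul_sqrt_div_comm (Nat.cast_nonneg n)]
  nlinarith

theorem stmt18 (f0 : ℕ → ℝ) (N : ℕ) (hN : 0 < N) (c : ℝ)
    (hbase : ∀ n : ℕ, N ≤ n → n ≤ 2 * N - 1 → f0 n ≥ c * Real.sqrt (n / 2))
    (hodd : ∀ n : ℕ, f0 (2 * n + 1) ≥ Real.sqrt 2 * f0 n)
    (heven : ∀ n : ℕ, f0 (2 * n) > Real.sqrt 2 * f0 n - 1 / Real.sqrt 2)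
    (hub : ∀ n : ℕ, f0 n ≤ Real.sqrt ((n + 1) / 2)) :
    ∀ n : ℕ, N ≤ n →
      f0 n > (c - (1 + Real.sqrt 2) / Real.sqrt N) * Real.sqrt (n / 2) := by
  have hc : c ≤ √2 := le_sqrt_two_of_mul_sqrt_half_le (x := N) (by exact_mod_cast hN)
    ((hbase N le_rfl (by omega)).trans (hub N))
  set a := c - (1 + √2) / √N
  have ha : a ≤ √2 := by
    have : 0 ≤ (1 + √2) / √N := by positivity
    linarith
  have hlower : ∀ n, N ≤ n → binaryLowerBound a n ≤ f0 n := by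
    refine Nat.le_induction_binary hN
      (fun n hn hn2 => (binaryLowerBound_le hN hn c).trans (hbase n hn (by omega)))
      (fun m hm ih => ⟨?_, ?_⟩)
    · rw [binaryLowerBound_two_mul]
      linarith [heven m, mul_le_mul_of_nonneg_left ih (sqrt_nonneg 2)]
    · exact (binaryLowerBound_two_mul_add_one_le ha (hN.trans_le hm)).trans
        ((mul_le_mul_of_nonneg_left ih (sqrt_nonneg 2)).trans (hodd m))
  intro n hn
  have hb : 0 < (1 + √2) / √2 := by positivity
  linarith [hlower n hn, show binaryLowerBound a n = a * √(n / 2) + (1 + √2) / √2 from rfl]
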